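/- Let C be a cartesian monoidal category. The lens tensor satisfies the interchange law: for lenses λ : (X₁,S₁) → (Y₁,R₁), λ' : (Y₁,R₁) → (Z₁,Q₁), μ : (X₂,S₂) → (Y₂,R₂) and μ' : (Y₂,R₂) → (Z₂,Q₂) over C, the composite (λ'⊗μ')∘(λ⊗μ) equals (λ'∘λ)⊗(μ'∘μ), i.e. forward and backward components coincide. -/
import Mathlib


open CategoryTheory CategoryTheory.Limits

universe u v

variable {C : Type u} [Category.{v} C] [HasFiniteProducts C]

/-- A lens `(X,S) → (Y,R)` over a cartesian monoidal category `C`. -/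
structure Lens (X S Y R : C) where
  v : X ⟶ Y
  u : X ⨯ R ⟶ S

/-- Composition of lenses (diagrammatic order: `l.comp m` is `m ∘ l`). -/
noncomputable def Lens.comp {X S Y R Z Q : C} (l : Lens X S Y R) (m : Lens Y R Z Q) :
    Lens X S Z Q where
  v := l.v ≫ m.v
  u := prod.lift prod.fst (prod.map l.v (𝟙 Q) ≫ m.u) ≫ l.u

/-- The tensor of lenses. -/
noncomputable def Lens.tensor {X₁ S₁ Y₁ R₁ X₂ S₂ Y₂ R₂ : C}
    (l : Lens X₁ S₁ Y₁ R₁) (m : Lens X₂ S₂ Y₂ R₂) :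
    Lens (X₁ ⨯ X₂) (S₂ ⨯ S₁) (Y₁ ⨯ Y₂) (R₂ ⨯ R₁) where
  v := prod.map l.v m.v
  u := prod.lift (prod.map prod.snd prod.fst ≫ m.u) (prod.map prod.fst prod.snd ≫ l.u)

/-- Interchange law for the lens tensor: `(λ'⊗μ')∘(λ⊗μ) = (λ'∘λ)⊗(μ'∘μ)`. -/
theorem lens_tensor_interchange {X₁ S₁ Y₁ R₁ Z₁ Q₁ X₂ S₂ Y₂ R₂ Z₂ Q₂ : C}
    (l : Lens X₁ S₁ Y₁ R₁) (l' : Lens Y₁ R₁ Z₁ Q₁)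
    (m : Lens X₂ S₂ Y₂ R₂) (m' : Lens Y₂ R₂ Z₂ Q₂) :
    ((l.tensor m).comp (l'.tensor m')).v = ((l.comp l').tensor (m.comp m')).v ∧
      ((l.tensor m).comp (l'.tensor m')).u = ((l.comp l').tensor (m.comp m')).u := by
  constructor
  · simp [Lens.comp, Lens.tensor, prod.map_map]
  · simp only [Lens.comp, Lens.tensor]
    apply Limits.prod.hom_ext <;>
    · simp only [Category.assoc, prod.lift_fst, prod.lift_snd, prod.comp_lift,
        prod.lift_map, prod.map_fst, prod.map_snd, prod.map_map, prod.lift_map_assoc,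
        prod.lift_fst_assoc, prod.lift_snd_assoc, prod.map_map_assoc]
      rw [prod.comp_lift_assoc]
      congr 1 <;> simp [prod.map_map]
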